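/- Let Ŝ ∈ GL₂(ℂ) with entries c11, c12, c21, c22 and let S(u) = (c11·u + c12)/(c21·u + c22) be the associated Möbius map. Then tr(M(S(u))·Ŝ·A·Ŝ⁻¹) = S'(u)·tr(M(u)·A) for every A ∈ M₂(ℂ) and every u with c21·u + c22 ≠ 0, where M(u) = [[-u, u²],[-1, u]] and S'(u) = det(Ŝ)/(c21·u + c22)². -/
import Mathlib


/-- The Hejhal matrix `M(u) = [[-u, u²],[-1, u]]`. -/
noncomputable def hejhalM (u : ℂ) : Matrix (Fin 2) (Fin 2) ℂ :=
  !![-u, u ^ 2; -1, u]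

/-- The Möbius action of a `2 × 2` complex matrix on `ℂ`. -/
noncomputable def mobiusAct (B : Matrix (Fin 2) (Fin 2) ℂ) (u : ℂ) : ℂ :=
  (B 0 0 * u + B 0 1) / (B 1 0 * u + B 1 1)

/-- Equivariance (weight `-2` transformation law) of the Hejhal matrix under Möbius
transformations: `tr(M(S u) · Ŝ A Ŝ⁻¹) = S'(u) · tr(M(u) · A)` where
`S'(u) = det Ŝ / (c₂₁ u + c₂₂)²`. -/
theorem hejhalM_equivariance (S A : Matrix (Fin 2) (Fin 2) ℂ)
    (hS : IsUnit S.det) (u : ℂ) (hu : S 1 0 * u + S 1 1 ≠ 0) :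
    Matrix.trace (hejhalM (mobiusAct S u) * S * A * S⁻¹) =
      S.det / (S 1 0 * u + S 1 1) ^ 2 * Matrix.trace (hejhalM u * A) := by
  have hd : S.det ≠ 0 := hS.ne_zero
  set q : ℂ := S 1 0 * u + S 1 1 with hq
  set v : ℂ := S 0 0 * u + S 0 1 with hv
  have hM : hejhalM (mobiusAct S u) =
      ((q ^ 2)⁻¹ : ℂ) • !![-(v * q), v ^ 2; -(q ^ 2), v * q] := by
    have : mobiusAct S u = v / q := rfl
    rw [this]
    ext i j
    fin_cases i <;> fin_cases j <;>
      simp [hejhalM, Matrix.smul_apply] <;> field_simp <;> ring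
  have hinv : S⁻¹ = (S.det)⁻¹ • S.adjugate := by
    rw [Matrix.inv_def, Ring.inverse_eq_inv]
  rw [hM, hinv]
  have key : Matrix.trace ((!![-(v * q), v ^ 2; -(q ^ 2), v * q] : Matrix (Fin 2) (Fin 2) ℂ)
      * S * A * S.adjugate) = S.det ^ 2 * Matrix.trace (hejhalM u * A) := by
    simp [hejhalM, Matrix.trace_fin_two, Matrix.mul_apply, Fin.sum_univ_two,
      Matrix.adjugate_fin_two, Matrix.det_fin_two, hq, hv, Matrix.vecMul, dotProduct]
    ring
  rw [Matrix.smul_mul, Matrix.smul_mul, Matrix.smul_mul, Matrix.mul_smul,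
    smul_smul, Matrix.trace_smul, smul_eq_mul, key]
  have hq2 : q ^ 2 ≠ 0 := pow_ne_zero 2 hu
  field_simp
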